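/- If λ and μ are densities of SK-metrics on a domain G (continuous, nonnegative, curvature ≤ -1 in the generalized sense), then σ(z) := max{λ(z), μ(z)} is again the density of an SK-metric on G, i.e., Δ(log σ)(z) ≥ σ(z)² at every point where σ(z) > 0, where Δ denotes the generalized lower Laplacian. -/
import Mathlib


/-- Generalized lower Laplace operator of a function `u : ℂ → ℝ` at `z`,
with values in `EReal`:
`liminf_{r→0⁺} (4/r²)((1/2π)∫₀^{2π} u(z+re^{it})dt − u(z))`. -/
noncomputable def genLap (u : ℂ → ℝ) (z : ℂ) : EReal :=
  Filter.liminf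
    (fun r : ℝ =>
      (((4 / r ^ 2) *
        ((1 / (2 * Real.pi)) *
          (∫ t in (0 : ℝ)..(2 * Real.pi),
            u (z + (r : ℂ) * Complex.exp ((t : ℂ) * Complex.I))) - u z) : ℝ) : EReal))
    (nhdsWithin 0 (Set.Ioi (0 : ℝ)))

lemma genLap_mono_aux (u v : ℂ → ℝ) (z : ℂ) (δ : ℝ) (hδ : 0 < δ)
    (hu : ContinuousOn u (Metric.ball z δ)) (hv : ContinuousOn v (Metric.ball z δ))
    (huz : u z = v z) (hle : ∀ w ∈ Metric.ball z δ, u w ≤ v w) :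
    genLap u z ≤ genLap v z := by
  refine Filter.liminf_le_liminf ?_ (by isBoundedDefault) (by isBoundedDefault)
  have hIoo : Set.Ioo (0:ℝ) δ ∈ nhdsWithin 0 (Set.Ioi (0:ℝ)) := by
    rw [show Set.Ioo (0:ℝ) δ = Set.Ioi 0 ∩ Set.Iio δ by ext x; simp [and_comm]]
    exact Filter.inter_mem self_mem_nhdsWithin
      (mem_nhdsWithin_of_mem_nhds (Iio_mem_nhds hδ))
  filter_upwards [hIoo] with r hr
  obtain ⟨hr0, hrδ⟩ := hr
  have hmem : ∀ t : ℝ, z + (r : ℂ) * Complex.exp ((t : ℂ) * Complex.I) ∈ Metric.ball z δ := by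
    intro t
    have : dist (z + (r : ℂ) * Complex.exp ((t : ℂ) * Complex.I)) z
        = ‖(r : ℂ) * Complex.exp ((t : ℂ) * Complex.I)‖ := by
      simp [dist_eq_norm]
    rw [Metric.mem_ball, this]
    rw [norm_mul, Complex.norm_exp_ofReal_mul_I]
    simpa [abs_of_pos hr0] using hrδ
  have hcirc : Continuous (fun t : ℝ => z + (r : ℂ) * Complex.exp ((t : ℂ) * Complex.I)) := by
    fun_prop
  have hiu : IntervalIntegrable (fun t : ℝ => u (z + (r : ℂ) * Complex.exp ((t : ℂ) * Complex.I)))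
      MeasureTheory.volume 0 (2 * Real.pi) := by
    apply ContinuousOn.intervalIntegrable
    exact hu.comp hcirc.continuousOn (fun t _ => hmem t)
  have hiv : IntervalIntegrable (fun t : ℝ => v (z + (r : ℂ) * Complex.exp ((t : ℂ) * Complex.I)))
      MeasureTheory.volume 0 (2 * Real.pi) := by
    apply ContinuousOn.intervalIntegrable
    exact hv.comp hcirc.continuousOn (fun t _ => hmem t)
  have hInt : (∫ t in (0:ℝ)..(2*Real.pi), u (z + (r : ℂ) * Complex.exp ((t : ℂ) * Complex.I)))
      ≤ ∫ t in (0:ℝ)..(2*Real.pi), v (z + (r : ℂ) * Complex.exp ((t : ℂ) * Complex.I)) := by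
    apply intervalIntegral.integral_mono_on (by positivity) hiu hiv
    intro t _
    exact hle _ (hmem t)
  have h2π : (0:ℝ) < 1 / (2 * Real.pi) := by positivity
  have h4 : (0:ℝ) ≤ 4 / r ^ 2 := by positivity
  apply EReal.coe_le_coe_iff.2
  apply mul_le_mul_of_nonneg_left _ h4
  rw [huz]
  exact sub_le_sub_right (mul_le_mul_of_nonneg_left hInt (le_of_lt h2π)) _

lemma max_key (G : Set ℂ) (hG : IsOpen G) (f g : ℂ → ℝ)
    (hfc : ContinuousOn f G) (hgc : ContinuousOn g G)
    (z : ℂ) (hz : z ∈ G) (hfz : 0 < f z) (hgf : g z ≤ f z)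
    (hcurv : ((f z ^ 2 : ℝ) : EReal) ≤ genLap (fun w => Real.log (f w)) z) :
    ((max (f z) (g z) ^ 2 : ℝ) : EReal)
      ≤ genLap (fun w => Real.log (max (f w) (g w))) z := by
  have hCA : ContinuousAt f z := hfc.continuousAt (hG.mem_nhds hz)
  have hev : ∀ᶠ w in nhds z, 0 < f w ∧ w ∈ G :=
    (hCA.eventually_mem (Ioi_mem_nhds hfz)).and (hG.mem_nhds hz)
  obtain ⟨δ, hδ, hball⟩ := Metric.eventually_nhds_iff_ball.1 hev
  have hmax : max (f z) (g z) = f z := max_eq_left hgf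
  rw [hmax]
  refine le_trans hcurv ?_
  apply genLap_mono_aux _ _ _ δ hδ
  · exact ContinuousOn.log (hfc.mono (fun w hw => (hball w hw).2))
      (fun w hw => ne_of_gt (hball w hw).1)
  · refine ContinuousOn.log ?_ (fun w hw => ?_)
    · exact ContinuousOn.sup (hfc.mono (fun w hw => (hball w hw).2))
        (hgc.mono (fun w hw => (hball w hw).2))
    · exact ne_of_gt (lt_of_lt_of_le (hball w hw).1 (le_max_left _ _))
  · rw [hmax]
  · intro w hw
    exact Real.log_le_log (hball w hw).1 (le_max_left _ _)


/-- The pointwise maximum of two densities of SK-metrics on a domain `G` is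
again the density of an SK-metric on `G`. -/
theorem max_of_SK_metrics (G : Set ℂ) (hG : IsOpen G) (hGc : IsConnected G)
    (lam mu : ℂ → ℝ)
    (hlc : ContinuousOn lam G) (hln : ∀ z ∈ G, 0 ≤ lam z)
    (hlne : ¬∀ z ∈ G, lam z = 0)
    (hlcurv : ∀ z ∈ G, 0 < lam z →
      ((lam z ^ 2 : ℝ) : EReal) ≤ genLap (fun w => Real.log (lam w)) z)
    (hmc : ContinuousOn mu G) (hmn : ∀ z ∈ G, 0 ≤ mu z)
    (hmne : ¬∀ z ∈ G, mu z = 0)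
    (hmcurv : ∀ z ∈ G, 0 < mu z →
      ((mu z ^ 2 : ℝ) : EReal) ≤ genLap (fun w => Real.log (mu w)) z) :
    ∀ z ∈ G, 0 < max (lam z) (mu z) →
      ((max (lam z) (mu z) ^ 2 : ℝ) : EReal)
        ≤ genLap (fun w => Real.log (max (lam w) (mu w))) z := by
  intro z hz hpos
  rcases le_total (mu z) (lam z) with h | h
  · have hfz : 0 < lam z := by simpa [max_eq_left h] using hpos
    exact max_key G hG lam mu hlc hmc z hz hfz h (hlcurv z hz hfz)
  · have hfz : 0 < mu z := by simpa [max_eq_right h] using hpos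
    have := max_key G hG mu lam hmc hlc z hz hfz h (hmcurv z hz hfz)
    simpa [max_comm] using this
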